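/- arXiv:1310.3860 — 5 statements merged into one kernel-verified Lean document; each statement's English description precedes it below -/
import Mathlib

section
/- For all 0 ≤ y₁, y₂ < k, the function ξ satisfies the two-point identity ξ(y₂) = e^{(μ/σ²)(y₂−k)} · sinh(Ξ(y₂−y₁))/sinh(Ξ(k−y₁)) + e^{(μ/σ²)(y₂−y₁)} · (sinh(Ξ(k−y₂))/sinh(Ξ(k−y₁))) · ξ(y₁). -/
/-!
`ξ(y) = e^{(μ/σ²) y} h(Ξ y)` where `h` is a linear combination of translates of `sinh`, and
`ξ(k) = 1`. Every such `h` satisfies the hyperbolic Ptolemy relation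
`h(c) sinh(b - a) = h(b) sinh(c - a) + h(a) sinh(b - c)`, a polynomial consequence of the
subtraction formula. Taking `a, b, c = Ξy₁, Ξk, Ξy₂`, redistributing the exponential factors and
dividing by `sinh(Ξ(k - y₁)) ≠ 0` gives the two-point identity.
-/

open Real Set

noncomputable section

/-- `Ξ = sqrt(2r/σ² + μ²/σ⁴)`. -/
def Xi (r μ σ : ℝ) : ℝ := Real.sqrt (2 * r / σ ^ 2 + μ ^ 2 / σ ^ 4)

/-- The closed-form expression for the Laplace transform
`ξ(y) = E[e^{-r τ_D(k)} | D_0 = y]` of the drawdown time of a Brownian motion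
with drift `μ` and volatility `σ`. -/
def xiFormula (r μ σ k y : ℝ) : ℝ :=
  exp (μ / σ ^ 2 * (y - k)) * (sinh (Xi r μ σ * y) / sinh (Xi r μ σ * k)) +
    exp (μ / σ ^ 2 * y) * (sinh (Xi r μ σ * (k - y)) / sinh (Xi r μ σ * k)) *
      (exp (-(μ / σ ^ 2) * k) * Xi r μ σ /
        (Xi r μ σ * cosh (Xi r μ σ * k) - μ / σ ^ 2 * sinh (Xi r μ σ * k)))

theorem Real.sinh_sub_mul_sinh_sub (a b c d : ℝ) :
    sinh (c - d) * sinh (b - a) = sinh (b - d) * sinh (c - a) + sinh (a - d) * sinh (b - c) := by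
  simp only [sinh_sub]
  ring

theorem exp_mul_sinh_comb_two_point {f : ℝ → ℝ} {m A p q d₁ d₂ : ℝ}
    (hf : ∀ y, f y = exp (m * y) * (p * sinh (A * y - d₁) + q * sinh (A * y - d₂)))
    (k y₁ y₂ : ℝ) :
    f y₂ * sinh (A * (k - y₁)) =
      exp (m * (y₂ - k)) * f k * sinh (A * (y₂ - y₁)) +
        exp (m * (y₂ - y₁)) * f y₁ * sinh (A * (k - y₂)) := by
  have h₁ := sinh_sub_mul_sinh_sub (A * y₁) (A * k) (A * y₂) d₁
  have h₂ := sinh_sub_mul_sinh_sub (A * y₁) (A * k) (A * y₂) d₂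
  simp only [← mul_sub] at h₁ h₂
  have hexp (a b : ℝ) : exp (m * (a - b)) * exp (m * b) = exp (m * a) := by
    rw [← exp_add]
    ring_nf
  rw [hf y₂, hf k, hf y₁]
  linear_combination exp (m * y₂) * (p * h₁ + q * h₂) -
    (p * sinh (A * k - d₁) + q * sinh (A * k - d₂)) * sinh (A * (y₂ - y₁)) * hexp y₂ k -
    (p * sinh (A * y₁ - d₁) + q * sinh (A * y₁ - d₂)) * sinh (A * (k - y₂)) * hexp y₂ y₁

theorem Xi_pos {r μ σ : ℝ} (hσ : σ ≠ 0) (hr : 0 < r) : 0 < Xi r μ σ :=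
  Real.sqrt_pos.mpr (by positivity)

theorem xiFormula_eq_exp_mul_sinh_comb (r μ σ k y : ℝ) :
    xiFormula r μ σ k y =
      exp (μ / σ ^ 2 * y) *
        (exp (-(μ / σ ^ 2) * k) / sinh (Xi r μ σ * k) * sinh (Xi r μ σ * y - 0) +
          -(exp (-(μ / σ ^ 2) * k) * Xi r μ σ /
              (Xi r μ σ * cosh (Xi r μ σ * k) - μ / σ ^ 2 * sinh (Xi r μ σ * k))) /
            sinh (Xi r μ σ * k) * sinh (Xi r μ σ * y - Xi r μ σ * k)) := by
  have hsinh : sinh (Xi r μ σ * (k - y)) = -sinh (Xi r μ σ * y - Xi r μ σ * k) := by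
    rw [← mul_sub, ← sinh_neg, ← mul_neg, neg_sub]
  have hexp : exp (μ / σ ^ 2 * (y - k)) = exp (μ / σ ^ 2 * y) * exp (-(μ / σ ^ 2) * k) := by
    rw [← exp_add]
    ring_nf
  rw [xiFormula, hsinh, hexp, sub_zero]
  ring

theorem xiFormula_self {r μ σ k : ℝ} (hk : sinh (Xi r μ σ * k) ≠ 0) :
    xiFormula r μ σ k k = 1 := by
  simp [xiFormula, hk]

theorem xi_two_point_identity (σ μ r k : ℝ) (hσ : 0 < σ) (hr : 0 < r) (hk : 0 < k) :
    ∀ y₁ ∈ Set.Ico (0 : ℝ) k, ∀ y₂ ∈ Set.Ico (0 : ℝ) k,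
      xiFormula r μ σ k y₂ =
        exp (μ / σ ^ 2 * (y₂ - k)) *
            (sinh (Xi r μ σ * (y₂ - y₁)) / sinh (Xi r μ σ * (k - y₁))) +
          exp (μ / σ ^ 2 * (y₂ - y₁)) *
            (sinh (Xi r μ σ * (k - y₂)) / sinh (Xi r μ σ * (k - y₁))) *
            xiFormula r μ σ k y₁ := by
  rintro y₁ ⟨-, hy₁k⟩ y₂ -
  have hXi := Xi_pos (μ := μ) hσ.ne' hr
  have hsinh_k : sinh (Xi r μ σ * k) ≠ 0 := (sinh_pos_iff.mpr (by positivity)).ne'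
  have hsinh_k_sub : sinh (Xi r μ σ * (k - y₁)) ≠ 0 :=
    (sinh_pos_iff.mpr (mul_pos hXi (sub_pos.mpr hy₁k))).ne'
  have hptolemy := exp_mul_sinh_comb_two_point (xiFormula_eq_exp_mul_sinh_comb r μ σ k) k y₁ y₂
  rw [xiFormula_self hsinh_k, mul_one] at hptolemy
  calc xiFormula r μ σ k y₂
      = xiFormula r μ σ k y₂ * sinh (Xi r μ σ * (k - y₁)) / sinh (Xi r μ σ * (k - y₁)) := by
        field_simp
    _ = _ := by
        rw [hptolemy]
        ring
end
end

section
/- Assume f̃(0) > 0, i.e. p > r(c + α ξ(0))/(1 − ξ(0)). Then there exists a unique θ* ∈ (0,k) satisfying the smooth-pasting equation F(θ*) = 0, where F(θ) = ( μ/σ² − Ξ coth(Ξ(k−θ)) ) f̃(θ) − f̃'(θ); moreover θ* lies in (0, θ₀), where θ₀ is the unique zero of f̃ in (0,k). -/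
open Real Set

noncomputable section

/-- `f̃(y) = p/r - (α + p/r) ξ(y) - c`. -/
def ftilde (r μ σ k p α c y : ℝ) : ℝ :=
  p / r - (α + p / r) * xiFormula r μ σ k y - c

/-- The smooth-pasting function
`F(θ) = (μ/σ² - Ξ coth(Ξ(k-θ))) f̃(θ) - f̃'(θ)`. -/
def smoothPastingF (r μ σ k p α c θ : ℝ) : ℝ :=
  (μ / σ ^ 2 - Xi r μ σ * (cosh (Xi r μ σ * (k - θ)) / sinh (Xi r μ σ * (k - θ)))) *
      ftilde r μ σ k p α c θ -
    deriv (fun u => ftilde r μ σ k p α c u) θ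

/-!
Write `m = μ/σ²` and `D(t) = Ξ cosh (Ξ t) - m sinh (Ξ t)`. The Wronskian identity
`D(k-θ) ξ(θ) + sinh (Ξ(k-θ)) ξ'(θ) = Ξ e^{m(θ-k)}` turns the smooth-pasting equation into
`e^{m(k-θ)} sinh (Ξ(k-θ)) F(θ) = -G(θ)` with `G(θ) = (p/r - c) q(θ) - (α + p/r) Ξ` and
`q(θ) = e^{m(k-θ)} D(k-θ)`, which is strictly decreasing because `|m| < Ξ`.
The hypothesis `f̃(0) > 0` says exactly `G(0) > 0`, while `G(k) = -(α + c) Ξ < 0`; hence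
`p/r - c > 0`, `G` is strictly decreasing and has a unique zero `θ*`. At the zero `θ₀` of `f̃`,
`F(θ₀) = -f̃'(θ₀) > 0`, so `G(θ₀) < 0 = G(θ*)` and `θ* < θ₀`.
-/

section Hyperbolic

variable {m X k : ℝ}

def drawdownDenom (m X t : ℝ) : ℝ := X * cosh (X * t) - m * sinh (X * t)

def drawdownLaplace (m X k y : ℝ) : ℝ :=
  exp (m * (y - k)) * (sinh (X * y) / sinh (X * k)) +
    exp (m * y) * (sinh (X * (k - y)) / sinh (X * k)) *
      (exp (-m * k) * X / drawdownDenom m X k)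

def pastingQ (m X k θ : ℝ) : ℝ := exp (m * (k - θ)) * drawdownDenom m X (k - θ)

lemma drawdownDenom_pos (hmX : |m| < X) {t : ℝ} (ht : 0 ≤ t) : 0 < drawdownDenom m X t := by
  have hX : 0 < X := (abs_nonneg m).trans_lt hmX
  have hs : 0 ≤ sinh (X * t) := sinh_nonneg_iff.2 (by positivity)
  rw [drawdownDenom, sub_pos]
  calc m * sinh (X * t) ≤ X * sinh (X * t) := by gcongr; exact (le_abs_self m).trans hmX.le
    _ < X * cosh (X * t) := by gcongr; exact sinh_lt_cosh _

lemma differentiable_drawdownLaplace : Differentiable ℝ (drawdownLaplace m X k) := by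
  unfold drawdownLaplace; fun_prop

lemma hasDerivAt_drawdownLaplace (hS : sinh (X * k) ≠ 0) (hD : drawdownDenom m X k ≠ 0) (y : ℝ) :
    HasDerivAt (drawdownLaplace m X k)
      (exp (m * (y - k)) * (X ^ 2 - m ^ 2) * sinh (X * y) / drawdownDenom m X k) y := by
  have hlin : ∀ a b : ℝ, HasDerivAt (fun y : ℝ => a * (y - b)) a y := fun a b => by
    simpa using ((hasDerivAt_id y).sub_const b).const_mul a
  have hlin' : ∀ a b : ℝ, HasDerivAt (fun y : ℝ => a * (b - y)) (-a) y := fun a b => by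
    simpa using ((hasDerivAt_id y).const_sub b).const_mul a
  have H := (((hlin m k).exp).mul (((hlin X 0).sinh).div_const (sinh (X * k)))).add
    ((((hlin m 0).exp).mul (((hlin' X k).sinh).div_const (sinh (X * k)))).mul_const
      (exp (-m * k) * X / drawdownDenom m X k))
  simp only [sub_zero] at H
  refine H.congr_deriv ?_
  rw [show m * (y - k) = m * y - m * k by ring, exp_sub, neg_mul, exp_neg,
    show X * (k - y) = X * k - X * y by ring, sinh_sub, cosh_sub]
  field_simp
  rw [drawdownDenom]
  field_simp
  ring

lemma continuous_pastingQ : Continuous (pastingQ m X k) := by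
  unfold pastingQ drawdownDenom; fun_prop

lemma hasDerivAt_pastingQ (θ : ℝ) :
    HasDerivAt (pastingQ m X k)
      (-((X ^ 2 - m ^ 2) * exp (m * (k - θ)) * sinh (X * (k - θ)))) θ := by
  have hlin : ∀ a : ℝ, HasDerivAt (fun θ : ℝ => a * (k - θ)) (-a) θ := fun a => by
    simpa using ((hasDerivAt_id θ).const_sub k).const_mul a
  have H := ((hlin m).exp).mul ((((hlin X).cosh).const_mul X).sub (((hlin X).sinh).const_mul m))
  refine H.congr_deriv ?_
  simp only [Pi.sub_apply]
  ring

lemma pastingQ_self : pastingQ m X k k = X := by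
  simp [pastingQ, drawdownDenom]

lemma strictAntiOn_pastingQ (hmX : |m| < X) : StrictAntiOn (pastingQ m X k) (Iic k) := by
  refine strictAntiOn_of_deriv_neg (convex_Iic k) continuous_pastingQ.continuousOn fun θ hθ => ?_
  rw [interior_Iic, mem_Iio] at hθ
  have hX : 0 < X := (abs_nonneg m).trans_lt hmX
  have hgap : 0 < X ^ 2 - m ^ 2 := by nlinarith [sq_abs m, abs_nonneg m]
  have hs : 0 < sinh (X * (k - θ)) := sinh_pos_iff.2 (mul_pos hX (sub_pos.2 hθ))
  rw [(hasDerivAt_pastingQ θ).deriv, neg_lt_zero]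
  positivity

lemma drawdownLaplace_zero (hS : sinh (X * k) ≠ 0) :
    drawdownLaplace m X k 0 = X / pastingQ m X k 0 := by
  simp only [drawdownLaplace, pastingQ, zero_sub, sub_zero, mul_zero, sinh_zero, zero_div, mul_zero,
    zero_add, exp_zero, one_mul, div_self hS, neg_mul, exp_neg]
  field_simp

lemma drawdownLaplace_self (hS : sinh (X * k) ≠ 0) : drawdownLaplace m X k k = 1 := by
  simp [drawdownLaplace, div_self hS]

lemma deriv_drawdownLaplace_pos (hmX : |m| < X) (hk : 0 < k) {y : ℝ} (hy : 0 < y) :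
    0 < deriv (drawdownLaplace m X k) y := by
  have hX : 0 < X := (abs_nonneg m).trans_lt hmX
  have hD := drawdownDenom_pos hmX hk.le
  have hgap : 0 < X ^ 2 - m ^ 2 := by nlinarith [sq_abs m, abs_nonneg m]
  have hs : 0 < sinh (X * y) := sinh_pos_iff.2 (mul_pos hX hy)
  rw [(hasDerivAt_drawdownLaplace (sinh_pos_iff.2 (mul_pos hX hk)).ne' hD.ne' y).deriv]
  positivity

lemma strictMonoOn_drawdownLaplace (hmX : |m| < X) (hk : 0 < k) :
    StrictMonoOn (drawdownLaplace m X k) (Ici 0) :=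
  strictMonoOn_of_deriv_pos (convex_Ici 0) differentiable_drawdownLaplace.continuous.continuousOn
    fun y hy => deriv_drawdownLaplace_pos hmX hk (by simpa using hy)

/-- The left side is `e^{-mθ}` times the Wronskian of `θ ↦ e^{mθ} sinh (X (k - θ))` and `ξ`, two
solutions of `u'' - 2 m u' - (X² - m²) u = 0`. -/
lemma drawdownDenom_mul_drawdownLaplace_add_sinh_mul_deriv (hS : sinh (X * k) ≠ 0)
    (hD : drawdownDenom m X k ≠ 0) (θ : ℝ) :
    drawdownDenom m X (k - θ) * drawdownLaplace m X k θ +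
        sinh (X * (k - θ)) * deriv (drawdownLaplace m X k) θ = X * exp (m * (θ - k)) := by
  rw [(hasDerivAt_drawdownLaplace hS hD θ).deriv]
  unfold drawdownLaplace
  rw [drawdownDenom, show X * (k - θ) = X * k - X * θ by ring, sinh_sub, cosh_sub,
    sinh_eq (X * θ), cosh_eq (X * θ), exp_neg (X * θ),
    show m * (θ - k) = m * θ - m * k by ring, exp_sub, neg_mul, exp_neg (m * k)]
  field_simp
  rw [drawdownDenom]
  ring

end Hyperbolic

lemma existsUnique_mem_Ioo_eq_zero_of_strictAntiOn {f : ℝ → ℝ} {a b : ℝ} (hab : a ≤ b)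
    (hcont : ContinuousOn f (Icc a b)) (hf : StrictAntiOn f (Icc a b)) (ha : 0 < f a)
    (hb : f b < 0) : ∃! x, x ∈ Ioo a b ∧ f x = 0 := by
  obtain ⟨x, hx, hfx⟩ := intermediate_value_Ioo' hab hcont ⟨hb, ha⟩
  exact ⟨x, ⟨hx, hfx⟩, fun y ⟨hy, hfy⟩ =>
    hf.injOn (Ioo_subset_Icc_self hy) (Ioo_subset_Icc_self hx) (hfy.trans hfx.symm)⟩

section SmoothPasting

variable {r μ σ k p α c θ : ℝ}

lemma abs_div_sq_lt_Xi (hσ : 0 < σ) (hr : 0 < r) : |μ / σ ^ 2| < Xi r μ σ := by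
  rw [Xi, lt_sqrt (abs_nonneg _), sq_abs, div_pow, ← pow_mul]
  have : 0 < 2 * r / σ ^ 2 := by positivity
  linarith

lemma sinh_Xi_mul_pos (hσ : 0 < σ) (hr : 0 < r) {t : ℝ} (ht : 0 < t) :
    0 < sinh (Xi r μ σ * t) :=
  sinh_pos_iff.2 (mul_pos ((abs_nonneg _).trans_lt (abs_div_sq_lt_Xi hσ hr)) ht)

lemma xiFormula_eq_drawdownLaplace (r μ σ k : ℝ) :
    xiFormula r μ σ k = drawdownLaplace (μ / σ ^ 2) (Xi r μ σ) k := rfl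

lemma deriv_ftilde (θ : ℝ) :
    deriv (fun u => ftilde r μ σ k p α c u) θ = -((α + p / r) * deriv (xiFormula r μ σ k) θ) :=
  ((((differentiable_drawdownLaplace θ).hasDerivAt.const_mul (α + p / r)).const_sub
    (p / r)).sub_const c).deriv

lemma continuous_ftilde : Continuous (ftilde r μ σ k p α c) :=
  (continuous_const.sub (continuous_const.mul differentiable_drawdownLaplace.continuous)).sub
    continuous_const

lemma ftilde_self (hσ : 0 < σ) (hr : 0 < r) (hk : 0 < k) : ftilde r μ σ k p α c k = -α - c := by
  rw [ftilde, xiFormula_eq_drawdownLaplace, drawdownLaplace_self (sinh_Xi_mul_pos hσ hr hk).ne']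
  ring

lemma strictAntiOn_ftilde (hσ : 0 < σ) (hr : 0 < r) (hk : 0 < k) (hβ : 0 < α + p / r) :
    StrictAntiOn (ftilde r μ σ k p α c) (Icc 0 k) := fun x hx y hy hxy => by
  have := strictMonoOn_drawdownLaplace (abs_div_sq_lt_Xi (μ := μ) hσ hr) hk hx.1 hy.1 hxy
  simp only [ftilde, xiFormula_eq_drawdownLaplace]
  nlinarith

lemma smoothPastingF_pos_of_ftilde_eq_zero (hσ : 0 < σ) (hr : 0 < r) (hk : 0 < k)
    (hβ : 0 < α + p / r) (hθ : 0 < θ) (hf : ftilde r μ σ k p α c θ = 0) :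
    0 < smoothPastingF r μ σ k p α c θ := by
  rw [smoothPastingF, hf, mul_zero, zero_sub, deriv_ftilde, neg_neg]
  exact mul_pos hβ (deriv_drawdownLaplace_pos (abs_div_sq_lt_Xi hσ hr) hk hθ)

def pastingGap (r μ σ k p α c θ : ℝ) : ℝ :=
  (p / r - c) * pastingQ (μ / σ ^ 2) (Xi r μ σ) k θ - (α + p / r) * Xi r μ σ

lemma smoothPastingF_mul_eq (hσ : 0 < σ) (hr : 0 < r) (hk : 0 < k) (hθ : θ < k) :
    smoothPastingF r μ σ k p α c θ *
        (exp (μ / σ ^ 2 * (k - θ)) * sinh (Xi r μ σ * (k - θ))) =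
      -pastingGap r μ σ k p α c θ := by
  have hmX := abs_div_sq_lt_Xi (μ := μ) hσ hr
  have hW := drawdownDenom_mul_drawdownLaplace_add_sinh_mul_deriv
    (sinh_Xi_mul_pos hσ hr hk).ne' (drawdownDenom_pos hmX hk.le).ne' θ
  have hs := (sinh_Xi_mul_pos (μ := μ) hσ hr (sub_pos.2 hθ)).ne'
  have hcoth : Xi r μ σ * (cosh (Xi r μ σ * (k - θ)) / sinh (Xi r μ σ * (k - θ))) *
      sinh (Xi r μ σ * (k - θ)) = Xi r μ σ * cosh (Xi r μ σ * (k - θ)) := by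
    field_simp
  have hE : exp (μ / σ ^ 2 * (k - θ)) * exp (μ / σ ^ 2 * (θ - k)) = 1 := by
    rw [← exp_add]; ring_nf; exact exp_zero
  rw [smoothPastingF, deriv_ftilde, ftilde, pastingGap, xiFormula_eq_drawdownLaplace, pastingQ]
  rw [drawdownDenom] at hW ⊢
  set ξ := drawdownLaplace (μ / σ ^ 2) (Xi r μ σ) k
  linear_combination (-exp (μ / σ ^ 2 * (k - θ)) * (p / r - (α + p / r) * ξ θ - c)) * hcoth +
    (α + p / r) * exp (μ / σ ^ 2 * (k - θ)) * hW + (α + p / r) * Xi r μ σ * hE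

lemma smoothPastingF_eq_zero_iff (hσ : 0 < σ) (hr : 0 < r) (hk : 0 < k) (hθ : θ < k) :
    smoothPastingF r μ σ k p α c θ = 0 ↔ pastingGap r μ σ k p α c θ = 0 := by
  have hP := mul_pos (exp_pos (μ / σ ^ 2 * (k - θ)))
    (sinh_Xi_mul_pos (μ := μ) hσ hr (sub_pos.2 hθ))
  rw [← mul_eq_zero_iff_right hP.ne', smoothPastingF_mul_eq hσ hr hk hθ, neg_eq_zero]

lemma smoothPastingF_pos_iff (hσ : 0 < σ) (hr : 0 < r) (hk : 0 < k) (hθ : θ < k) :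
    0 < smoothPastingF r μ σ k p α c θ ↔ pastingGap r μ σ k p α c θ < 0 := by
  have hP := mul_pos (exp_pos (μ / σ ^ 2 * (k - θ)))
    (sinh_Xi_mul_pos (μ := μ) hσ hr (sub_pos.2 hθ))
  rw [← mul_pos_iff_of_pos_right hP, smoothPastingF_mul_eq hσ hr hk hθ, neg_pos]

lemma pastingGap_zero_pos (hσ : 0 < σ) (hr : 0 < r) (hk : 0 < k)
    (h0 : 0 < ftilde r μ σ k p α c 0) : 0 < pastingGap r μ σ k p α c 0 := by
  have hq : 0 < pastingQ (μ / σ ^ 2) (Xi r μ σ) k 0 := by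
    simpa [pastingQ] using mul_pos (exp_pos _) (drawdownDenom_pos (abs_div_sq_lt_Xi hσ hr) hk.le)
  rw [ftilde, xiFormula_eq_drawdownLaplace,
    drawdownLaplace_zero (sinh_Xi_mul_pos hσ hr hk).ne'] at h0
  calc 0 < (p / r - (α + p / r) * (Xi r μ σ / pastingQ (μ / σ ^ 2) (Xi r μ σ) k 0) - c) *
        pastingQ (μ / σ ^ 2) (Xi r μ σ) k 0 := mul_pos h0 hq
    _ = pastingGap r μ σ k p α c 0 := by
      rw [pastingGap]; field_simp; ring

lemma pastingGap_self : pastingGap r μ σ k p α c k = -(α + c) * Xi r μ σ := by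
  rw [pastingGap, pastingQ_self]
  ring

lemma strictAntiOn_pastingGap (hσ : 0 < σ) (hr : 0 < r) (hA : 0 < p / r - c) :
    StrictAntiOn (pastingGap r μ σ k p α c) (Iic k) := fun x hx y hy hxy => by
  have := strictAntiOn_pastingQ (abs_div_sq_lt_Xi (μ := μ) hσ hr) hx hy hxy
  simp only [pastingGap]
  nlinarith

lemma continuous_pastingGap : Continuous (pastingGap r μ σ k p α c) :=
  (continuous_pastingQ.const_mul _).sub continuous_const

end SmoothPasting

theorem smooth_pasting_exists_unique (σ μ r k p α c : ℝ)
    (hσ : 0 < σ) (hr : 0 < r) (hk : 0 < k) (hα : 0 < α) (hc : 0 < c)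
    (h0 : 0 < ftilde r μ σ k p α c 0) :
    ∃ θstar ∈ Set.Ioo (0 : ℝ) k,
      smoothPastingF r μ σ k p α c θstar = 0 ∧
        (∀ θ ∈ Set.Ioo (0 : ℝ) k, smoothPastingF r μ σ k p α c θ = 0 → θ = θstar) ∧
        (∃! θ₀, θ₀ ∈ Set.Ioo (0 : ℝ) k ∧ ftilde r μ σ k p α c θ₀ = 0) ∧
        ∀ θ₀ ∈ Set.Ioo (0 : ℝ) k, ftilde r μ σ k p α c θ₀ = 0 → θstar < θ₀ := by
  have hX : 0 < Xi r μ σ := (abs_nonneg _).trans_lt (abs_div_sq_lt_Xi (μ := μ) hσ hr)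
  have hG0 := pastingGap_zero_pos hσ hr hk h0
  have hGk : pastingGap r μ σ k p α c k < 0 := by
    rw [pastingGap_self]; nlinarith
  have hA : 0 < p / r - c := by
    have hq := strictAntiOn_pastingQ (abs_div_sq_lt_Xi (μ := μ) hσ hr)
      (mem_Iic.2 hk.le) (mem_Iic.2 le_rfl) hk
    simp only [pastingGap] at hG0 hGk
    nlinarith
  have hG : StrictAntiOn (pastingGap r μ σ k p α c) (Icc 0 k) :=
    (strictAntiOn_pastingGap hσ hr hA).mono Icc_subset_Iic_self
  obtain ⟨θstar, ⟨hθstar, hGθstar⟩, hGuniq⟩ := existsUnique_mem_Ioo_eq_zero_of_strictAntiOn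
    hk.le continuous_pastingGap.continuousOn hG hG0 hGk
  refine ⟨θstar, hθstar, (smoothPastingF_eq_zero_iff hσ hr hk hθstar.2).2 hGθstar,
    fun θ hθ hFθ => hGuniq θ ⟨hθ, (smoothPastingF_eq_zero_iff hσ hr hk hθ.2).1 hFθ⟩,
    existsUnique_mem_Ioo_eq_zero_of_strictAntiOn hk.le continuous_ftilde.continuousOn
      (strictAntiOn_ftilde hσ hr hk (by linarith)) h0 (by rw [ftilde_self hσ hr hk]; linarith),
    fun θ₀ hθ₀ hf => ?_⟩
  have hGθ₀ := (smoothPastingF_pos_iff hσ hr hk hθ₀.2).1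
    (smoothPastingF_pos_of_ftilde_eq_zero hσ hr hk (by linarith) hθ₀.1 hf)
  exact (hG.lt_iff_gt (Ioo_subset_Icc_self hθ₀) (Ioo_subset_Icc_self hθstar)).1
    (hGθ₀.trans_eq hGθstar.symm)
end
end

section
/- Assume f̃(0) > 0 and let θ* ∈ (0,k) be the unique root of the smooth-pasting equation F(θ) = ( μ/σ² − Ξ coth(Ξ(k−θ)) ) f̃(θ) − f̃'(θ) = 0. Define g(y;θ*) = e^{(μ/σ²)(y−θ*)} ( sinh(Ξ(k−y)) / sinh(Ξ(k−θ*)) ) f̃(θ*) for y ∈ (θ*, k). Then g(y;θ*) > f̃(y) for every y ∈ (θ*, k). -/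
open Real Set

noncomputable section

lemma exp_convex_combo {d X s : ℝ} (h : |d| < X) (hs : s ≠ 0) :
    2 * X * Real.exp (d * s) < (X + d) * Real.exp (X * s) + (X - d) * Real.exp (-(X * s)) := by
  have hX : 0 < X := (abs_nonneg d).trans_lt h
  have hd1 : -X < d := neg_lt_of_abs_lt h
  have hd2 : d < X := lt_of_abs_lt h
  have ha : (0:ℝ) < (X + d) / (2 * X) := div_pos (by linarith) (by linarith)
  have hb : (0:ℝ) < (X - d) / (2 * X) := div_pos (by linarith) (by linarith)
  have hab : (X + d) / (2 * X) + (X - d) / (2 * X) = 1 := by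
    field_simp
    ring
  have hne : X * s ≠ -(X * s) := by
    have hXs : X * s ≠ 0 := mul_ne_zero hX.ne' hs
    intro hcon
    apply hXs
    linarith
  have hconv := strictConvexOn_exp.2 (Set.mem_univ (X * s)) (Set.mem_univ (-(X * s))) hne ha hb hab
  simp only [smul_eq_mul] at hconv
  have harg : (X + d) / (2 * X) * (X * s) + (X - d) / (2 * X) * (-(X * s)) = d * s := by
    field_simp
    ring
  rw [harg] at hconv
  have h2 := mul_lt_mul_of_pos_left hconv (show (0:ℝ) < 2 * X by linarith)
  have heq : 2 * X * ((X + d) / (2 * X) * Real.exp (X * s) + (X - d) / (2 * X) * Real.exp (-(X * s)))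
      = (X + d) * Real.exp (X * s) + (X - d) * Real.exp (-(X * s)) := by
    field_simp
  rw [heq] at h2
  exact h2

lemma ftilde_deriv (r μ σ k p α c y : ℝ) :
    deriv (fun u => ftilde r μ σ k p α c u) y =
      -((α + p / r) *
        ((exp (μ / σ ^ 2 * (y - k)) * (μ / σ ^ 2 * sinh (Xi r μ σ * y) + Xi r μ σ * cosh (Xi r μ σ * y))
            / sinh (Xi r μ σ * k))
          + (exp (μ / σ ^ 2 * y) * (μ / σ ^ 2 * sinh (Xi r μ σ * (k - y)) - Xi r μ σ * cosh (Xi r μ σ * (k - y)))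
            / sinh (Xi r μ σ * k))
            * (exp (-(μ / σ ^ 2) * k) * Xi r μ σ /
                (Xi r μ σ * cosh (Xi r μ σ * k) - μ / σ ^ 2 * sinh (Xi r μ σ * k))))) := by
  have h1 : HasDerivAt (fun u : ℝ => μ / σ ^ 2 * (u - k)) (μ / σ ^ 2) y := by
    simpa using ((hasDerivAt_id y).sub_const k).const_mul (μ / σ ^ 2)
  have h2 : HasDerivAt (fun u : ℝ => Xi r μ σ * u) (Xi r μ σ) y := by
    simpa using (hasDerivAt_id y).const_mul (Xi r μ σ)
  have h3 : HasDerivAt (fun u : ℝ => μ / σ ^ 2 * u) (μ / σ ^ 2) y := by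
    simpa using (hasDerivAt_id y).const_mul (μ / σ ^ 2)
  have h4 : HasDerivAt (fun u : ℝ => Xi r μ σ * (k - u)) (-(Xi r μ σ)) y := by
    simpa using ((hasDerivAt_const y k).sub (hasDerivAt_id y)).const_mul (Xi r μ σ)
  have hft := ((hasDerivAt_const y (p / r)).sub
    (((h1.exp.mul ((h2.sinh).div_const (Real.sinh (Xi r μ σ * k)))).add
      ((h3.exp.mul ((h4.sinh).div_const (Real.sinh (Xi r μ σ * k)))).mul_const
        (Real.exp (-(μ / σ ^ 2) * k) * Xi r μ σ /
          (Xi r μ σ * Real.cosh (Xi r μ σ * k) - μ / σ ^ 2 * Real.sinh (Xi r μ σ * k))))).const_mul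
      (α + p / r))).sub_const c
  have h5 : HasDerivAt (fun u => ftilde r μ σ k p α c u) _ y := hft
  rw [h5.deriv]
  ring

set_option maxHeartbeats 2000000 in
lemma master (m X k θ y pr B c : ℝ)
    (hX : 0 < X) (hSk : 0 < sinh (X * k)) (hSθ : 0 < sinh (X * (k - θ)))
    (hDpos : 0 < X * cosh (X * k) - m * sinh (X * k)) (hK : 0 < pr - c) (habs : |m| < X)
    (hroot : (m - X * (cosh (X * (k - θ)) / sinh (X * (k - θ)))) * (pr - B * (exp (m * (θ - k)) * (sinh (X * θ) / sinh (X * k)) + exp (m * θ) * (sinh (X * (k - θ)) / sinh (X * k)) * (exp (-m * k) * X / (X * cosh (X * k) - m * sinh (X * k)))) - c) - -(B * (exp (m * (θ - k)) * (m * sinh (X * θ) + X * cosh (X * θ)) / sinh (X * k) + exp (m * θ) * (m * sinh (X * (k - θ)) - X * cosh (X * (k - θ))) / sinh (X * k) * (exp (-m * k) * X / (X * cosh (X * k) - m * sinh (X * k))))) = 0) :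
    (exp (m * (y - θ)) * (sinh (X * (k - y)) / sinh (X * (k - θ))) * (pr - B * (exp (m * (θ - k)) * (sinh (X * θ) / sinh (X * k)) + exp (m * θ) * (sinh (X * (k - θ)) / sinh (X * k)) * (exp (-m * k) * X / (X * cosh (X * k) - m * sinh (X * k)))) - c) + B * (exp (m * (y - k)) * (sinh (X * y) / sinh (X * k)) + exp (m * y) * (sinh (X * (k - y)) / sinh (X * k)) * (exp (-m * k) * X / (X * cosh (X * k) - m * sinh (X * k))))) * X
      = (pr - c) * (exp (m * (y - θ)) * (X * cosh (X * (y - θ)) - m * sinh (X * (y - θ)))) := by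
  have h4' : B * ((m * sinh (X * (k - θ)) - X * cosh (X * (k - θ))) * (exp (m * (θ - k)) * sinh (X * θ) * (X * cosh (X * k) - m * sinh (X * k)) + exp (m * θ) * sinh (X * (k - θ)) * (exp (-m * k) * X)) - sinh (X * (k - θ)) * (exp (m * (θ - k)) * (m * sinh (X * θ) + X * cosh (X * θ)) * (X * cosh (X * k) - m * sinh (X * k)) + exp (m * θ) * (m * sinh (X * (k - θ)) - X * cosh (X * (k - θ))) * (exp (-m * k) * X))) = ((m * sinh (X * (k - θ)) - X * cosh (X * (k - θ))) * ((pr - c) * sinh (X * k) * (X * cosh (X * k) - m * sinh (X * k)))) := by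
    linear_combination (norm := (field_simp [hSθ.ne', hSk.ne', hDpos.ne']; ring1))
      (-(sinh (X * (k - θ)) * sinh (X * k) * (X * cosh (X * k) - m * sinh (X * k)))) * hroot
  have hMS : m * sinh (X * (k - θ)) - X * cosh (X * (k - θ)) < 0 := by
    have hsc : sinh (X * (k - θ)) < cosh (X * (k - θ)) := by
      rw [Real.cosh_eq, Real.sinh_eq]
      have := Real.exp_pos (-(X * (k - θ)))
      linarith
    nlinarith [mul_le_mul_of_nonneg_right (le_abs_self m) hSθ.le,
      mul_lt_mul_of_pos_right habs hSθ, mul_lt_mul_of_pos_left hsc hX]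
  have hNB : ((m * sinh (X * (k - θ)) - X * cosh (X * (k - θ))) * ((pr - c) * sinh (X * k) * (X * cosh (X * k) - m * sinh (X * k)))) < 0 := by
    nlinarith [hMS, mul_pos (mul_pos hK hSk) hDpos]
  have hGne : ((m * sinh (X * (k - θ)) - X * cosh (X * (k - θ))) * (exp (m * (θ - k)) * sinh (X * θ) * (X * cosh (X * k) - m * sinh (X * k)) + exp (m * θ) * sinh (X * (k - θ)) * (exp (-m * k) * X)) - sinh (X * (k - θ)) * (exp (m * (θ - k)) * (m * sinh (X * θ) + X * cosh (X * θ)) * (X * cosh (X * k) - m * sinh (X * k)) + exp (m * θ) * (m * sinh (X * (k - θ)) - X * cosh (X * (k - θ))) * (exp (-m * k) * X))) ≠ 0 := by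
    intro hG0
    rw [hG0, mul_zero] at h4'
    nlinarith [hNB, h4']
  have hM2 : (X * exp (m * (y - θ)) * sinh (X * (k - y)) * ((pr - c) * sinh (X * k) * (X * cosh (X * k) - m * sinh (X * k)))) * ((m * sinh (X * (k - θ)) - X * cosh (X * (k - θ))) * (exp (m * (θ - k)) * sinh (X * θ) * (X * cosh (X * k) - m * sinh (X * k)) + exp (m * θ) * sinh (X * (k - θ)) * (exp (-m * k) * X)) - sinh (X * (k - θ)) * (exp (m * (θ - k)) * (m * sinh (X * θ) + X * cosh (X * θ)) * (X * cosh (X * k) - m * sinh (X * k)) + exp (m * θ) * (m * sinh (X * (k - θ)) - X * cosh (X * (k - θ))) * (exp (-m * k) * X))) + ((m * sinh (X * (k - θ)) - X * cosh (X * (k - θ))) * ((pr - c) * sinh (X * k) * (X * cosh (X * k) - m * sinh (X * k)))) * (X * ((exp (m * (y - k)) * sinh (X * y) * (X * cosh (X * k) - m * sinh (X * k)) + exp (m * y) * sinh (X * (k - y)) * (exp (-m * k) * X)) * sinh (X * (k - θ)) - exp (m * (y - θ)) * sinh (X * (k - y)) * (exp (m * (θ - k)) * sinh (X * θ) * (X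 * cosh (X * k) - m * sinh (X * k)) + exp (m * θ) * sinh (X * (k - θ)) * (exp (-m * k) * X)))) = (pr - c) * (exp (m * (y - θ)) * (X * cosh (X * (y - θ)) - m * sinh (X * (y - θ)))) * sinh (X * k) * (X * cosh (X * k) - m * sinh (X * k)) * sinh (X * (k - θ)) * ((m * sinh (X * (k - θ)) - X * cosh (X * (k - θ))) * (exp (m * (θ - k)) * sinh (X * θ) * (X * cosh (X * k) - m * sinh (X * k)) + exp (m * θ) * sinh (X * (k - θ)) * (exp (-m * k) * X)) - sinh (X * (k - θ)) * (exp (m * (θ - k)) * (m * sinh (X * θ) + X * cosh (X * θ)) * (X * cosh (X * k) - m * sinh (X * k)) + exp (m * θ) * (m * sinh (X * (k - θ)) - X * cosh (X * (k - θ))) * (exp (-m * k) * X))) := by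
    simp only [Real.sinh_eq, Real.cosh_eq, mul_sub, neg_sub, neg_mul, Real.exp_sub, Real.exp_neg]
    field_simp
    ring
  have h5 : ((X * exp (m * (y - θ)) * sinh (X * (k - y)) * ((pr - c) * sinh (X * k) * (X * cosh (X * k) - m * sinh (X * k)))) + B * (X * ((exp (m * (y - k)) * sinh (X * y) * (X * cosh (X * k) - m * sinh (X * k)) + exp (m * y) * sinh (X * (k - y)) * (exp (-m * k) * X)) * sinh (X * (k - θ)) - exp (m * (y - θ)) * sinh (X * (k - y)) * (exp (m * (θ - k)) * sinh (X * θ) * (X * cosh (X * k) - m * sinh (X * k)) + exp (m * θ) * sinh (X * (k - θ)) * (exp (-m * k) * X))))) * ((m * sinh (X * (k - θ)) - X * cosh (X * (k - θ))) * (exp (m * (θ - k)) * sinh (X * θ) * (X * cosh (X * k) - m * sinh (X * k)) + exp (m * θ) * sinh (X * (k - θ)) * (exp (-m * k) * X)) - sinh (X * (k - θ)) * (exp (m * (θ - k)) * (m * sinh (X * θ) + X * cosh (X * θ)) * (X * cosh (X * k) - m * sinh (X * k)) + exp (m * θ) * (m * sinh (X * (k - θ)) - X * cosh (X * (k - θ)))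 * (exp (-m * k) * X))) = ((pr - c) * (exp (m * (y - θ)) * (X * cosh (X * (y - θ)) - m * sinh (X * (y - θ)))) * sinh (X * k) * (X * cosh (X * k) - m * sinh (X * k)) * sinh (X * (k - θ))) * ((m * sinh (X * (k - θ)) - X * cosh (X * (k - θ))) * (exp (m * (θ - k)) * sinh (X * θ) * (X * cosh (X * k) - m * sinh (X * k)) + exp (m * θ) * sinh (X * (k - θ)) * (exp (-m * k) * X)) - sinh (X * (k - θ)) * (exp (m * (θ - k)) * (m * sinh (X * θ) + X * cosh (X * θ)) * (X * cosh (X * k) - m * sinh (X * k)) + exp (m * θ) * (m * sinh (X * (k - θ)) - X * cosh (X * (k - θ))) * (exp (-m * k) * X))) := by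
    linear_combination (X * ((exp (m * (y - k)) * sinh (X * y) * (X * cosh (X * k) - m * sinh (X * k)) + exp (m * y) * sinh (X * (k - y)) * (exp (-m * k) * X)) * sinh (X * (k - θ)) - exp (m * (y - θ)) * sinh (X * (k - y)) * (exp (m * (θ - k)) * sinh (X * θ) * (X * cosh (X * k) - m * sinh (X * k)) + exp (m * θ) * sinh (X * (k - θ)) * (exp (-m * k) * X)))) * h4' + hM2
  have hM3 : (X * exp (m * (y - θ)) * sinh (X * (k - y)) * ((pr - c) * sinh (X * k) * (X * cosh (X * k) - m * sinh (X * k)))) + B * (X * ((exp (m * (y - k)) * sinh (X * y) * (X * cosh (X * k) - m * sinh (X * k)) + exp (m * y) * sinh (X * (k - y)) * (exp (-m * k) * X)) * sinh (X * (k - θ)) - exp (m * (y - θ)) * sinh (X * (k - y)) * (exp (m * (θ - k)) * sinh (X * θ) * (X * cosh (X * k) - m * sinh (X * k)) + exp (m * θ) * sinh (X * (k - θ)) * (exp (-m * k) * X)))) = (pr - c) * (exp (m * (y - θ)) * (X * cosh (X * (y - θ)) - m * sinh (X * (y - θ)))) * sinh (X * k) * (X * cosh (X * k) - m * sinh (X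 * k)) * sinh (X * (k - θ)) :=
    mul_right_cancel₀ hGne h5
  have hSDS : sinh (X * k) * (X * cosh (X * k) - m * sinh (X * k)) * sinh (X * (k - θ)) ≠ 0 :=
    mul_ne_zero (mul_ne_zero hSk.ne' hDpos.ne') hSθ.ne'
  apply mul_right_cancel₀ hSDS
  have hexp : ((exp (m * (y - θ)) * (sinh (X * (k - y)) / sinh (X * (k - θ))) * (pr - B * (exp (m * (θ - k)) * (sinh (X * θ) / sinh (X * k)) + exp (m * θ) * (sinh (X * (k - θ)) / sinh (X * k)) * (exp (-m * k) * X / (X * cosh (X * k) - m * sinh (X * k)))) - c) + B * (exp (m * (y - k)) * (sinh (X * y) / sinh (X * k)) + exp (m * y) * (sinh (X * (k - y)) / sinh (X * k)) * (exp (-m * k) * X / (X * cosh (X * k) - m * sinh (X * k))))) * X) * (sinh (X * k) * (X * cosh (X * k) - m * sinh (X * k)) * sinh (X * (k - θ)))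
      = (X * exp (m * (y - θ)) * sinh (X * (k - y)) * ((pr - c) * sinh (X * k) * (X * cosh (X * k) - m * sinh (X * k)))) + B * (X * ((exp (m * (y - k)) * sinh (X * y) * (X * cosh (X * k) - m * sinh (X * k)) + exp (m * y) * sinh (X * (k - y)) * (exp (-m * k) * X)) * sinh (X * (k - θ)) - exp (m * (y - θ)) * sinh (X * (k - y)) * (exp (m * (θ - k)) * sinh (X * θ) * (X * cosh (X * k) - m * sinh (X * k)) + exp (m * θ) * sinh (X * (k - θ)) * (exp (-m * k) * X)))) := by
    field_simp [hSθ.ne', hSk.ne', hDpos.ne']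
    ring
  rw [hexp, hM3]
  ring

set_option maxHeartbeats 2000000 in
theorem value_dominates_reward (σ μ r k p α c θstar : ℝ)
    (hσ : 0 < σ) (hr : 0 < r) (hk : 0 < k) (hα : 0 < α) (hc : 0 < c)
    (h0 : 0 < ftilde r μ σ k p α c 0)
    (hθ : θstar ∈ Set.Ioo (0 : ℝ) k)
    (hroot : smoothPastingF r μ σ k p α c θstar = 0)
    (huniq : ∀ θ ∈ Set.Ioo (0 : ℝ) k, smoothPastingF r μ σ k p α c θ = 0 → θ = θstar) :
    ∀ y ∈ Set.Ioo θstar k,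
      ftilde r μ σ k p α c y <
        exp (μ / σ ^ 2 * (y - θstar)) *
          (sinh (Xi r μ σ * (k - y)) / sinh (Xi r μ σ * (k - θstar))) *
          ftilde r μ σ k p α c θstar := by
  intro y hy
  obtain ⟨hθ1, hθ2⟩ := hθ
  obtain ⟨hy1, hy2⟩ := hy
  have hσ2 : (0:ℝ) < σ ^ 2 := by positivity
  have habs : |μ / σ ^ 2| < Xi r μ σ := by
    rw [Xi]
    rw [Real.lt_sqrt (abs_nonneg _), sq_abs]
    have h1 : (μ / σ ^ 2) ^ 2 = μ ^ 2 / σ ^ 4 := by ring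
    have h2 : 0 < 2 * r / σ ^ 2 := by positivity
    linarith
  have hX : 0 < Xi r μ σ := (abs_nonneg _).trans_lt habs
  have hSk : 0 < sinh (Xi r μ σ * k) := Real.sinh_pos_iff.mpr (mul_pos hX hk)
  have hSθ : 0 < sinh (Xi r μ σ * (k - θstar)) := Real.sinh_pos_iff.mpr (mul_pos hX (by linarith))
  have hD : Xi r μ σ * exp (-(μ / σ ^ 2) * k) < Xi r μ σ * cosh (Xi r μ σ * k) - μ / σ ^ 2 * sinh (Xi r μ σ * k) := by
    have h := exp_convex_combo (d := -(μ / σ ^ 2)) (X := Xi r μ σ) (s := k) (by rwa [abs_neg]) hk.ne'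
    rw [Real.cosh_eq, Real.sinh_eq]
    linarith
  have hDpos : 0 < Xi r μ σ * cosh (Xi r μ σ * k) - μ / σ ^ 2 * sinh (Xi r μ σ * k) := lt_trans (by positivity) hD
  have hV : Xi r μ σ < (exp (μ / σ ^ 2 * (y - θstar)) * (Xi r μ σ * cosh (Xi r μ σ * (y - θstar)) - μ / σ ^ 2 * sinh (Xi r μ σ * (y - θstar)))) := by
    have hs : y - θstar ≠ 0 := sub_ne_zero.mpr hy1.ne'
    have h := exp_convex_combo (d := -(μ / σ ^ 2)) (X := Xi r μ σ) (s := y - θstar) (by rwa [abs_neg]) hs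
    have hmul := mul_lt_mul_of_pos_left h (Real.exp_pos (μ / σ ^ 2 * (y - θstar)))
    have hee : Real.exp (μ / σ ^ 2 * (y - θstar)) * (2 * Xi r μ σ * Real.exp (-(μ / σ ^ 2) * (y - θstar))) = 2 * Xi r μ σ := by
      rw [show Real.exp (μ / σ ^ 2 * (y - θstar)) * (2 * Xi r μ σ * Real.exp (-(μ / σ ^ 2) * (y - θstar)))
          = 2 * Xi r μ σ * Real.exp (μ / σ ^ 2 * (y - θstar) + -(μ / σ ^ 2) * (y - θstar)) from by rw [Real.exp_add]; ring]
      norm_num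
    rw [Real.cosh_eq, Real.sinh_eq]
    nlinarith [hmul, hee]
  have hx0 : xiFormula r μ σ k 0 = exp (-(μ / σ ^ 2) * k) * Xi r μ σ / (Xi r μ σ * cosh (Xi r μ σ * k) - μ / σ ^ 2 * sinh (Xi r μ σ * k)) := by
    simp [xiFormula, div_self hSk.ne']
  have ht1 : 0 < exp (-(μ / σ ^ 2) * k) * Xi r μ σ / (Xi r μ σ * cosh (Xi r μ σ * k) - μ / σ ^ 2 * sinh (Xi r μ σ * k)) := div_pos (by positivity) hDpos
  have ht2 : exp (-(μ / σ ^ 2) * k) * Xi r μ σ / (Xi r μ σ * cosh (Xi r μ σ * k) - μ / σ ^ 2 * sinh (Xi r μ σ * k)) < 1 := (div_lt_one hDpos).mpr (by linarith)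
  have hf0 : 0 < p / r - (α + p / r) * (exp (-(μ / σ ^ 2) * k) * Xi r μ σ / (Xi r μ σ * cosh (Xi r μ σ * k) - μ / σ ^ 2 * sinh (Xi r μ σ * k))) - c := by
    have h := h0
    simp only [ftilde] at h
    rwa [hx0] at h
  have hB : 0 < α + p / r := by nlinarith [hf0, ht1, ht2, hα, hc]
  have hK : 0 < p / r - c := by nlinarith [hf0, mul_pos hB ht1]
  simp only [smoothPastingF] at hroot
  rw [ftilde_deriv] at hroot
  simp only [ftilde, xiFormula] at hroot
  have hfinal := master (μ / σ ^ 2) (Xi r μ σ) k θstar y (p / r) (α + p / r) c hX hSk hSθ hDpos hK habs hroot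
  have hlt : (p / r - c) * Xi r μ σ < (p / r - c) * (exp (μ / σ ^ 2 * (y - θstar)) * (Xi r μ σ * cosh (Xi r μ σ * (y - θstar)) - μ / σ ^ 2 * sinh (Xi r μ σ * (y - θstar)))) := mul_lt_mul_of_pos_left hV hK
  simp only [ftilde, xiFormula]
  have h6 : (p / r - (α + p / r) * (exp (μ / σ ^ 2 * (y - k)) * (sinh (Xi r μ σ * y) / sinh (Xi r μ σ * k)) + exp (μ / σ ^ 2 * y) * (sinh (Xi r μ σ * (k - y)) / sinh (Xi r μ σ * k)) * (exp (-(μ / σ ^ 2) * k) * Xi r μ σ / (Xi r μ σ * cosh (Xi r μ σ * k) - μ / σ ^ 2 * sinh (Xi r μ σ * k)))) - c) * Xi r μ σ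
      < (exp (μ / σ ^ 2 * (y - θstar)) * (sinh (Xi r μ σ * (k - y)) / sinh (Xi r μ σ * (k - θstar))) * (p / r - (α + p / r) * (exp (μ / σ ^ 2 * (θstar - k)) * (sinh (Xi r μ σ * θstar) / sinh (Xi r μ σ * k)) + exp (μ / σ ^ 2 * θstar) * (sinh (Xi r μ σ * (k - θstar)) / sinh (Xi r μ σ * k)) * (exp (-(μ / σ ^ 2) * k) * Xi r μ σ / (Xi r μ σ * cosh (Xi r μ σ * k) - μ / σ ^ 2 * sinh (Xi r μ σ * k)))) - c)) * Xi r μ σ := by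
    nlinarith [hfinal, hlt]
  exact lt_of_mul_lt_mul_right h6 hX.le
end
end

section
/- The function ξ has the following properties: (i) ξ is positive and increasing on (0,k); (ii) ξ satisfies the ordinary differential equation (1/2)σ² ξ''(y) − μ ξ'(y) = r ξ(y) on (0,k) with the Neumann boundary condition ξ'(0) = 0; (iii) ξ is strictly convex, i.e. ξ''(y) > 0 for all y ∈ (0,k). -/
/-!
With `b = μ/σ²` we have `Ξ² − b² = 2r/σ² > 0`, so `|b| < Ξ`. The addition formula for
`sinh (Ξ(k − y))` collapses the two terms of `ξ` into `ξ(y) = g(y)/g(k)` with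
`g(y) = e^{by} (Ξ cosh(Ξy) − b sinh(Ξy))`. Then `g' = (Ξ² − b²) e^{by} sinh(Ξy)` and
`g'' = (Ξ² − b²) e^{by} (Ξ cosh(Ξy) + b sinh(Ξy))`; positivity of `g`, `g'` on `(0, ∞)` and `g''`
follows from `±b sinh t < Ξ cosh t`, and the ODE from `g'' − 2b g' = (Ξ² − b²) g`.
-/

open Real Set

noncomputable section

-- The `g` of the header, for `b = μ/σ²` and `X = Ξ`.
def xiProfile (b X y : ℝ) : ℝ := exp (b * y) * (X * cosh (X * y) - b * sinh (X * y))

lemma mul_sinh_lt_mul_cosh {b X : ℝ} (h : |b| < X) (t : ℝ) : b * sinh t < X * cosh t :=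
  calc b * sinh t ≤ |b| * |sinh t| := (le_abs_self _).trans (abs_mul _ _).le
    _ ≤ |b| * cosh t := by
        gcongr
        rw [abs_sinh, ← cosh_abs]
        exact (sinh_lt_cosh _).le
    _ < X * cosh t := by gcongr

lemma xiProfile_pos {b X : ℝ} (h : |b| < X) (y : ℝ) : 0 < xiProfile b X y :=
  mul_pos (exp_pos _) (sub_pos.2 (mul_sinh_lt_mul_cosh h _))

lemma hasDerivAt_xiProfile (b X y : ℝ) :
    HasDerivAt (xiProfile b X) ((X ^ 2 - b ^ 2) * (exp (b * y) * sinh (X * y))) y := by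
  have hb : HasDerivAt (fun u => b * u) b y := hasDerivAt_const_mul b
  have hX : HasDerivAt (fun u => X * u) X y := hasDerivAt_const_mul X
  exact (hb.exp.mul ((hX.cosh.const_mul X).sub (hX.sinh.const_mul b))).congr_deriv
    (by simp only [Pi.sub_apply]; ring)

lemma hasDerivAt_exp_mul_mul_sinh (b X y : ℝ) :
    HasDerivAt (fun u => exp (b * u) * sinh (X * u))
      (exp (b * y) * (X * cosh (X * y) + b * sinh (X * y))) y := by
  have hb : HasDerivAt (fun u => b * u) b y := hasDerivAt_const_mul b
  have hX : HasDerivAt (fun u => X * u) X y := hasDerivAt_const_mul X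
  exact (hb.exp.mul hX.sinh).congr_deriv (by ring)

lemma deriv_xiProfile (b X : ℝ) :
    deriv (xiProfile b X) = fun y => (X ^ 2 - b ^ 2) * (exp (b * y) * sinh (X * y)) :=
  funext fun y => (hasDerivAt_xiProfile b X y).deriv

lemma deriv_deriv_xiProfile (b X : ℝ) :
    deriv (deriv (xiProfile b X)) =
      fun y => (X ^ 2 - b ^ 2) * (exp (b * y) * (X * cosh (X * y) + b * sinh (X * y))) := by
  rw [deriv_xiProfile]
  exact funext fun y => ((hasDerivAt_exp_mul_mul_sinh b X y).const_mul _).deriv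

lemma deriv_deriv_xiProfile_sub (b X y : ℝ) :
    deriv (deriv (xiProfile b X)) y - 2 * b * deriv (xiProfile b X) y =
      (X ^ 2 - b ^ 2) * xiProfile b X y := by
  rw [deriv_deriv_xiProfile, deriv_xiProfile, xiProfile]
  ring

lemma deriv_xiProfile_zero (b X : ℝ) : deriv (xiProfile b X) 0 = 0 := by
  simp [deriv_xiProfile]

lemma deriv_xiProfile_pos {b X y : ℝ} (h : |b| < X) (hy : 0 < y) :
    0 < deriv (xiProfile b X) y := by
  rw [deriv_xiProfile]
  have hXy : 0 < X * y := mul_pos ((abs_nonneg b).trans_lt h) hy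
  exact mul_pos (sub_pos.2 (sq_lt_sq' (abs_lt.1 h).1 (abs_lt.1 h).2)) (mul_pos (exp_pos _) (sinh_pos_iff.2 hXy))

lemma deriv_deriv_xiProfile_pos {b X : ℝ} (h : |b| < X) (y : ℝ) :
    0 < deriv (deriv (xiProfile b X)) y := by
  rw [deriv_deriv_xiProfile]
  have hb : -b * sinh (X * y) < X * cosh (X * y) := mul_sinh_lt_mul_cosh (by rwa [abs_neg]) _
  exact mul_pos (sub_pos.2 (sq_lt_sq' (abs_lt.1 h).1 (abs_lt.1 h).2)) (mul_pos (exp_pos _) (by linarith))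

lemma xiProfile_div_xiProfile (b X k y : ℝ) (hS : sinh (X * k) ≠ 0)
    (hD : X * cosh (X * k) - b * sinh (X * k) ≠ 0) :
    exp (b * (y - k)) * (sinh (X * y) / sinh (X * k)) +
        exp (b * y) * (sinh (X * (k - y)) / sinh (X * k)) *
          (exp (-b * k) * X / (X * cosh (X * k) - b * sinh (X * k))) =
      xiProfile b X y / xiProfile b X k := by
  rw [xiProfile, xiProfile, mul_sub b y k, exp_sub, neg_mul, exp_neg, mul_sub X k y, sinh_sub]
  -- `field_simp` normalizes `X * k` to `k * X` and would then no longer recognize `hD`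
  set D := X * cosh (X * k) - b * sinh (X * k) with hD_def
  field_simp
  rw [hD_def]
  field_simp
  ring

lemma sq_Xi_sub_sq {r μ σ : ℝ} (hr : 0 ≤ r) :
    Xi r μ σ ^ 2 - (μ / σ ^ 2) ^ 2 = 2 * r / σ ^ 2 := by
  rw [Xi, sq_sqrt (by positivity)]
  ring

lemma abs_lt_Xi {r μ σ : ℝ} (hσ : σ ≠ 0) (hr : 0 < r) : |μ / σ ^ 2| < Xi r μ σ :=
  abs_lt_of_sq_lt_sq (sub_pos.1 (by rw [sq_Xi_sub_sq hr.le]; positivity)) (sqrt_nonneg _)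

lemma xiProfile_ode {σ μ r : ℝ} (hσ : σ ≠ 0) (hr : 0 ≤ r) (y : ℝ) :
    (1 / 2) * σ ^ 2 * deriv (deriv (xiProfile (μ / σ ^ 2) (Xi r μ σ))) y -
        μ * deriv (xiProfile (μ / σ ^ 2) (Xi r μ σ)) y =
      r * xiProfile (μ / σ ^ 2) (Xi r μ σ) y := by
  have hode := deriv_deriv_xiProfile_sub (μ / σ ^ 2) (Xi r μ σ) y
  have hμ : σ ^ 2 * (μ / σ ^ 2) = μ := mul_div_cancel₀ μ (by positivity)
  have hc : σ ^ 2 * (Xi r μ σ ^ 2 - (μ / σ ^ 2) ^ 2) = 2 * r := by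
    rw [sq_Xi_sub_sq hr]
    field_simp
  linear_combination (1 / 2 * σ ^ 2) * hode + deriv (xiProfile (μ / σ ^ 2) (Xi r μ σ)) y * hμ +
    (1 / 2 * xiProfile (μ / σ ^ 2) (Xi r μ σ) y) * hc

lemma xiFormula_eq {σ μ r k : ℝ} (hσ : σ ≠ 0) (hr : 0 < r) (hk : 0 < k) (y : ℝ) :
    xiFormula r μ σ k y =
      xiProfile (μ / σ ^ 2) (Xi r μ σ) y / xiProfile (μ / σ ^ 2) (Xi r μ σ) k := by
  have hb := abs_lt_Xi (μ := μ) hσ hr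
  have hXk : 0 < Xi r μ σ * k := mul_pos ((abs_nonneg _).trans_lt hb) hk
  refine xiProfile_div_xiProfile _ _ k y (sinh_pos_iff.2 hXk).ne' ?_
  exact (sub_pos.2 (mul_sinh_lt_mul_cosh hb _)).ne'

theorem xi_properties (σ μ r k : ℝ) (hσ : 0 < σ) (hr : 0 < r) (hk : 0 < k) :
    -- (i) ξ is positive and (strictly) increasing on (0,k)
    (∀ y ∈ Set.Ioo (0 : ℝ) k, 0 < xiFormula r μ σ k y) ∧
      StrictMonoOn (fun y => xiFormula r μ σ k y) (Set.Ioo (0 : ℝ) k) ∧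
      -- (ii) the ODE (1/2)σ²ξ'' − μξ' = rξ on (0,k) with Neumann condition ξ'(0) = 0
      (∀ y ∈ Set.Ioo (0 : ℝ) k,
        (1 / 2) * σ ^ 2 * deriv (deriv (fun u => xiFormula r μ σ k u)) y -
            μ * deriv (fun u => xiFormula r μ σ k u) y =
          r * xiFormula r μ σ k y) ∧
      deriv (fun u => xiFormula r μ σ k u) 0 = 0 ∧
      -- (iii) ξ is strictly convex: ξ'' > 0 on (0,k)
      (∀ y ∈ Set.Ioo (0 : ℝ) k,
        0 < deriv (deriv (fun u => xiFormula r μ σ k u)) y) := by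
  have hb : |μ / σ ^ 2| < Xi r μ σ := abs_lt_Xi hσ.ne' hr
  set g := xiProfile (μ / σ ^ 2) (Xi r μ σ)
  have hgk : 0 < g k := xiProfile_pos hb k
  have hξ : (fun u => xiFormula r μ σ k u) = fun u => g u / g k :=
    funext (xiFormula_eq hσ.ne' hr hk)
  have hξ' : deriv (fun u => xiFormula r μ σ k u) = fun y => deriv g y / g k := by
    rw [hξ]; exact funext fun y => deriv_div_const _
  have hξ'' : deriv (deriv (fun u => xiFormula r μ σ k u)) = fun y => deriv (deriv g) y / g k := by
    rw [hξ']; exact funext fun y => deriv_div_const _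
  rw [hξ'', hξ']
  simp only [xiFormula_eq hσ.ne' hr hk]
  refine ⟨fun y _ => div_pos (xiProfile_pos hb y) hgk, ?_, fun y _ => ?_,
    by rw [deriv_xiProfile_zero, zero_div], fun y _ => div_pos (deriv_deriv_xiProfile_pos hb y) hgk⟩
  · refine strictMonoOn_of_deriv_pos (convex_Ioo 0 k) ?_ fun y hy => ?_
    · exact fun y _ => ((hasDerivAt_xiProfile _ _ y).continuousAt.div_const _).continuousWithinAt
    · rw [interior_Ioo] at hy
      rw [deriv_div_const]
      exact div_pos (deriv_xiProfile_pos hb hy.1) hgk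
  · linear_combination xiProfile_ode (μ := μ) hσ.ne' hr.le y / g k
end
end

section
/- Define Λ(y) = e^{−(μ/σ²)y} ξ(y) / sinh(Ξ(k−y)) for y ∈ [0,k). Then Λ is differentiable on [0,k) with Λ'(y) = Ξ e^{−(μ/σ²)k} / sinh²(Ξ(k−y)) > 0 for all y ∈ [0,k); equivalently, Λ(y₂) − Λ(y₁) = e^{−(μ/σ²)k} sinh(Ξ(y₂−y₁)) / ( sinh(Ξ(k−y₁)) sinh(Ξ(k−y₂)) ) for all y₁, y₂ ∈ [0,k). -/
open Real Set

noncomputable section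

/-- `Λ(y) = e^{-(μ/σ²)y} ξ(y) / sinh(Ξ(k-y))`. -/
def LambdaFn (r μ σ k y : ℝ) : ℝ :=
  exp (-(μ / σ ^ 2) * y) * xiFormula r μ σ k y / sinh (Xi r μ σ * (k - y))

/-! The factor `e^{-(μ/σ²)y}` cancels every exponential in `y` inside `ξ(y)`, so that
`Λ(y) = A · sinh(Ξy) / sinh(Ξ(k-y)) + B` with `A = e^{-(μ/σ²)k} / sinh(Ξk)` and a
constant `B`.
Both claims then reduce to the addition formula for `sinh`:
`sinh(Ξy) cosh(Ξ(k-y)) + cosh(Ξy) sinh(Ξ(k-y)) = sinh(Ξk)` gives the derivative, and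
`sinh b sinh(c-a) - sinh a sinh(c-b) = sinh c sinh(b-a)` gives the difference. -/

theorem sinh_mul_sinh_sub_sub_sinh_mul_sinh_sub (a b c : ℝ) :
    sinh b * sinh (c - a) - sinh a * sinh (c - b) = sinh c * sinh (b - a) := by
  simp only [sinh_sub]
  ring

theorem hasDerivAt_sinh_mul_div_sinh_mul_sub (X k y : ℝ) (hy : sinh (X * (k - y)) ≠ 0) :
    HasDerivAt (fun u => sinh (X * u) / sinh (X * (k - u)))
      (X * sinh (X * k) / sinh (X * (k - y)) ^ 2) y := by
  have hnum : HasDerivAt (fun u => sinh (X * u)) (cosh (X * y) * X) y :=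
    (hasDerivAt_sinh _).comp y ((hasDerivAt_id y).const_mul X |>.congr_deriv (mul_one X))
  have hden : HasDerivAt (fun u => sinh (X * (k - u))) (cosh (X * (k - y)) * -X) y :=
    (hasDerivAt_sinh _).comp y
      (((hasDerivAt_id y).const_sub k).const_mul X |>.congr_deriv (by ring))
  refine (hnum.div hden hy).congr_deriv ?_
  rw [show X * k = X * y + X * (k - y) by ring, sinh_add]
  ring

theorem sinh_mul_div_sinh_mul_sub_sub (X k y₁ y₂ : ℝ)
    (h₁ : sinh (X * (k - y₁)) ≠ 0) (h₂ : sinh (X * (k - y₂)) ≠ 0) :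
    sinh (X * y₂) / sinh (X * (k - y₂)) - sinh (X * y₁) / sinh (X * (k - y₁)) =
      sinh (X * k) * sinh (X * (y₂ - y₁)) /
        (sinh (X * (k - y₁)) * sinh (X * (k - y₂))) := by
  rw [div_sub_div _ _ h₂ h₁, mul_comm (sinh (X * (k - y₂))) (sinh (X * (k - y₁))),
    mul_comm (sinh (X * (k - y₂))) (sinh (X * y₁))]
  congr 1
  simpa only [mul_sub] using
    sinh_mul_sinh_sub_sub_sinh_mul_sinh_sub (X * y₁) (X * y₂) (X * k)

theorem LambdaFn_eq (r μ σ k y : ℝ) (hy : sinh (Xi r μ σ * (k - y)) ≠ 0) :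
    LambdaFn r μ σ k y =
      exp (-(μ / σ ^ 2) * k) / sinh (Xi r μ σ * k) *
          (sinh (Xi r μ σ * y) / sinh (Xi r μ σ * (k - y))) +
        exp (-(μ / σ ^ 2) * k) * Xi r μ σ /
          (Xi r μ σ * cosh (Xi r μ σ * k) - μ / σ ^ 2 * sinh (Xi r μ σ * k)) /
          sinh (Xi r μ σ * k) := by
  have hexp : exp (μ / σ ^ 2 * (y - k)) = exp (-(μ / σ ^ 2) * k) * exp (μ / σ ^ 2 * y) := by
    rw [← exp_add]; ring_nf
  rw [LambdaFn, xiFormula, hexp, show -(μ / σ ^ 2) * y = -(μ / σ ^ 2 * y) by ring, exp_neg]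
  field_simp

theorem sinh_Xi_mul_sub_pos {r μ σ k y : ℝ} (hσ : σ ≠ 0) (hr : 0 < r) (hy : y < k) :
    0 < sinh (Xi r μ σ * (k - y)) :=
  sinh_pos_iff.2 (mul_pos (Xi_pos hσ hr) (sub_pos.2 hy))

theorem sinh_Xi_mul_ne_zero {r μ σ k : ℝ} (hσ : σ ≠ 0) (hr : 0 < r) (hk : k ≠ 0) :
    sinh (Xi r μ σ * k) ≠ 0 :=
  sinh_ne_zero.2 (mul_ne_zero (Xi_pos hσ hr).ne' hk)

theorem hasDerivAt_LambdaFn {r μ σ k y : ℝ} (hσ : σ ≠ 0) (hr : 0 < r) (hk : k ≠ 0)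
    (hy : y < k) :
    HasDerivAt (fun u => LambdaFn r μ σ k u)
      (Xi r μ σ * exp (-(μ / σ ^ 2) * k) / sinh (Xi r μ σ * (k - y)) ^ 2) y := by
  have hLambda : (fun u => LambdaFn r μ σ k u) =ᶠ[nhds y] _ :=
    Filter.eventuallyEq_of_mem (Iio_mem_nhds hy) fun u hu =>
      LambdaFn_eq r μ σ k u (sinh_Xi_mul_sub_pos hσ hr hu).ne'
  refine (((hasDerivAt_sinh_mul_div_sinh_mul_sub _ k y
    (sinh_Xi_mul_sub_pos hσ hr hy).ne').const_mul _).add_const _).congr_of_eventuallyEq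
      hLambda |>.congr_deriv ?_
  rw [mul_comm (Xi r μ σ) (sinh _), mul_div_assoc, ← mul_assoc,
    div_mul_cancel₀ _ (sinh_Xi_mul_ne_zero hσ hr hk), mul_div_left_comm, mul_div_assoc]

theorem LambdaFn_sub_LambdaFn {r μ σ k y₁ y₂ : ℝ} (hσ : σ ≠ 0) (hr : 0 < r)
    (hk : k ≠ 0) (h₁ : y₁ < k) (h₂ : y₂ < k) :
    LambdaFn r μ σ k y₂ - LambdaFn r μ σ k y₁ =
      exp (-(μ / σ ^ 2) * k) * sinh (Xi r μ σ * (y₂ - y₁)) /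
        (sinh (Xi r μ σ * (k - y₁)) * sinh (Xi r μ σ * (k - y₂))) := by
  have hs₁ := (sinh_Xi_mul_sub_pos (μ := μ) hσ hr h₁).ne'
  have hs₂ := (sinh_Xi_mul_sub_pos (μ := μ) hσ hr h₂).ne'
  rw [LambdaFn_eq r μ σ k y₁ hs₁, LambdaFn_eq r μ σ k y₂ hs₂, add_sub_add_right_eq_sub,
    ← mul_sub, sinh_mul_div_sinh_mul_sub_sub _ _ _ _ hs₁ hs₂,
    mul_div_assoc, ← mul_assoc, div_mul_cancel₀ _ (sinh_Xi_mul_ne_zero hσ hr hk),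
    mul_div_assoc]

theorem Lambda_deriv_general (σ μ r k : ℝ) (hσ : 0 < σ) (hr : 0 < r) :
    (∀ y ∈ Set.Ico (0 : ℝ) k,
      HasDerivAt (fun u => LambdaFn r μ σ k u)
        (Xi r μ σ * exp (-(μ / σ ^ 2) * k) / sinh (Xi r μ σ * (k - y)) ^ 2) y ∧
        0 < Xi r μ σ * exp (-(μ / σ ^ 2) * k) / sinh (Xi r μ σ * (k - y)) ^ 2) ∧
      ∀ y₁ ∈ Set.Ico (0 : ℝ) k, ∀ y₂ ∈ Set.Ico (0 : ℝ) k,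
        LambdaFn r μ σ k y₂ - LambdaFn r μ σ k y₁ =
          exp (-(μ / σ ^ 2) * k) * sinh (Xi r μ σ * (y₂ - y₁)) /
            (sinh (Xi r μ σ * (k - y₁)) * sinh (Xi r μ σ * (k - y₂))) :=
  ⟨fun _ hy => ⟨hasDerivAt_LambdaFn hσ.ne' hr (hy.1.trans_lt hy.2).ne' hy.2,
      div_pos (mul_pos (Xi_pos hσ.ne' hr) (exp_pos _))
        (pow_pos (sinh_Xi_mul_sub_pos hσ.ne' hr hy.2) 2)⟩,
    fun _ hy₁ _ hy₂ =>
      LambdaFn_sub_LambdaFn hσ.ne' hr (hy₁.1.trans_lt hy₁.2).ne' hy₁.2 hy₂.2⟩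

theorem Lambda_deriv (σ μ r k : ℝ) (hσ : 0 < σ) (hr : 0 < r) (hk : 0 < k) :
    (∀ y ∈ Set.Ico (0 : ℝ) k,
      HasDerivAt (fun u => LambdaFn r μ σ k u)
        (Xi r μ σ * exp (-(μ / σ ^ 2) * k) / sinh (Xi r μ σ * (k - y)) ^ 2) y ∧
        0 < Xi r μ σ * exp (-(μ / σ ^ 2) * k) / sinh (Xi r μ σ * (k - y)) ^ 2) ∧
      ∀ y₁ ∈ Set.Ico (0 : ℝ) k, ∀ y₂ ∈ Set.Ico (0 : ℝ) k,
        LambdaFn r μ σ k y₂ - LambdaFn r μ σ k y₁ =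
          exp (-(μ / σ ^ 2) * k) * sinh (Xi r μ σ * (y₂ - y₁)) /
            (sinh (Xi r μ σ * (k - y₁)) * sinh (Xi r μ σ * (k - y₂))) :=
  Lambda_deriv_general σ μ r k hσ hr
end
end
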